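/- arXiv:1905.02769 — 5 statements merged into one kernel-verified Lean document; each statement's English description precedes it below -/
import Mathlib

section
/- For every natural number m ≥ 2, one has m * (2*m^2 / (2*m^2 + m - 1))^(m-1) > (m + 1) / 2, where all quantities are real numbers and the exponent m−1 is a natural-number power. -/
theorem key_inequality (m : ℕ) (hm : 2 ≤ m) :
    (m : ℝ) * (2 * (m : ℝ)^2 / (2 * (m : ℝ)^2 + (m : ℝ) - 1)) ^ (m - 1) >
      ((m : ℝ) + 1) / 2 := by
  have hx : (2:ℝ) ≤ (m:ℝ) := by exact_mod_cast hm
  set x := (m:ℝ) with hxdef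
  have hD : 0 < 2*x^2 + x - 1 := by nlinarith
  have hcast : ((m-1:ℕ):ℝ) = x - 1 := by
    have : (1:ℕ) ≤ m := by omega
    push_cast [Nat.cast_sub this]
    ring
  set a : ℝ := -((x-1)/(2*x^2+x-1)) with ha
  have ha2 : -2 ≤ a := by
    have hq : (x-1)/(2*x^2+x-1) ≤ 2 := by
      rw [div_le_iff₀ hD]; nlinarith
    rw [ha]; linarith
  have hber := one_add_mul_le_pow ha2 (m-1)
  have hratio : 2 * x^2 / (2*x^2 + x - 1) = 1 + a := by
    rw [ha, div_eq_iff hD.ne', add_mul, neg_mul, div_mul_cancel₀ _ hD.ne']; ring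
  rw [hratio]
  have h1 : x * (1 + (m-1:ℕ)*a) ≤ x * (1+a)^(m-1) :=
    mul_le_mul_of_nonneg_left hber (by linarith)
  refine lt_of_lt_of_le ?_ h1
  rw [hcast, ha]
  rw [div_lt_iff₀ (by norm_num : (0:ℝ) < 2)]
  have key : x * (1 + (x-1) * -((x-1)/(2*x^2+x-1))) * 2 - (x+1)
      = (x-1)*(3*x-1)/(2*x^2+x-1) := by
    rw [eq_div_iff hD.ne']
    linear_combination (-2*x*(x-1)) * div_mul_cancel₀ (x-1) hD.ne'
  nlinarith [div_pos (by nlinarith : (0:ℝ) < (x-1)*(3*x-1)) hD]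
end

section
/- The function f : ℝ → ℝ given by f(x) = (x − 1) * Real.log (2*x^2 / (2*x^2 + x − 1)) − Real.log ((x + 1) / (2*x)) is strictly decreasing on the interval [6, ∞). -/
open Real Set

/-- Quartic lower bound for `log (1+t)` on `t ≥ 0`. -/
lemma log_quartic_lower (t : ℝ) (ht : 0 ≤ t) :
    t - t^2/2 + t^3/3 - t^4/4 ≤ Real.log (1 + t) := by
  set g : ℝ → ℝ := fun u => Real.log (1 + u) - (u - u^2/2 + u^3/3 - u^4/4) with hg
  have hder : ∀ s : ℝ, 0 ≤ s → HasDerivAt g (s^4 / (1 + s)) s := by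
    intro s hs
    have hs1 : (1 : ℝ) + s ≠ 0 := by positivity
    have h1 : HasDerivAt (fun u : ℝ => 1 + u) 1 s := by
      simpa using (hasDerivAt_id s).const_add (1 : ℝ)
    have h2 : HasDerivAt (fun u : ℝ => Real.log (1 + u)) (1 / (1 + s)) s := h1.log hs1
    have h3 : HasDerivAt (fun u : ℝ => u - u^2/2 + u^3/3 - u^4/4)
        (1 - s + s^2 - s^3) s := by
      have := (((hasDerivAt_id s).sub ((hasDerivAt_pow 2 s).div_const 2)).add
        ((hasDerivAt_pow 3 s).div_const 3)).sub ((hasDerivAt_pow 4 s).div_const 4)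
      refine this.congr_deriv ?_
      ring
    have := h2.sub h3
    refine this.congr_deriv ?_
    field_simp
    ring
  have hmono : MonotoneOn g (Set.Ici (0:ℝ)) := by
    apply monotoneOn_of_deriv_nonneg (convex_Ici 0)
    · intro s hs
      exact (hder s hs).differentiableAt.continuousAt.continuousWithinAt
    · intro s hs
      rw [interior_Ici] at hs
      exact (hder s (le_of_lt hs)).differentiableAt.differentiableWithinAt
    · intro s hs
      rw [interior_Ici] at hs
      rw [(hder s hs.le).deriv]
      have hs' : (0:ℝ) < s := hs
      exact div_nonneg (pow_nonneg hs'.le 4) (by linarith)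
  have h0 : g 0 ≤ g t := hmono (by simp) (by simpa using ht) ht
  have : g 0 = 0 := by simp [hg]
  rw [this] at h0
  simpa [hg, sub_nonneg] using h0

/-- Positivity of the cleared-denominator polynomial for `x ≥ 6`. -/
lemma numer_pos (x : ℝ) (hx : 6 ≤ x) :
    0 < 48*x^9 - 248*x^8 - 222*x^7 + 39*x^6 - 3*x^4 - 6*x^3 + 17*x^2 - 12*x + 3 := by
  have h : 0 ≤ x - 6 := by linarith
  nlinarith [pow_nonneg h 2, pow_nonneg h 3, pow_nonneg h 4, pow_nonneg h 5,
    pow_nonneg h 6, pow_nonneg h 7, pow_nonneg h 8, pow_nonneg h 9]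

/-- Key rational inequality. -/
lemma key_ineq (x : ℝ) (hx : 6 ≤ x) :
    (x - 1)*(x - 2)/(x*(2*x^2 + x - 1)) + 1/(x*(x + 1)) <
      (x-1)/(2*x^2) - ((x-1)/(2*x^2))^2/2 + ((x-1)/(2*x^2))^3/3 - ((x-1)/(2*x^2))^4/4 := by
  have hx0 : (0:ℝ) < x := by linarith
  have hd : (0:ℝ) < 2*x^2 + x - 1 := by nlinarith
  have hx1 : (0:ℝ) < x + 1 := by linarith
  have hN := numer_pos x hx
  have hD : (0:ℝ) < 192*x^8*(2*x^2 + x - 1)*(x + 1) := by positivity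
  have hkey : ((x-1)/(2*x^2) - ((x-1)/(2*x^2))^2/2 + ((x-1)/(2*x^2))^3/3 -
      ((x-1)/(2*x^2))^4/4) - ((x - 1)*(x - 2)/(x*(2*x^2 + x - 1)) + 1/(x*(x + 1))) =
      (48*x^9 - 248*x^8 - 222*x^7 + 39*x^6 - 3*x^4 - 6*x^3 + 17*x^2 - 12*x + 3) /
        (192*x^8*(2*x^2 + x - 1)*(x + 1)) := by
    have hd' := hd.ne'
    generalize hdd : 2*x^2 + x - 1 = d at hd' ⊢
    field_simp
    subst hdd
    ring
  have := div_pos hN hD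
  linarith [hkey ▸ this]

/-- The derivative of `f` at `x ≥ 6`. -/
lemma hasDerivAt_f (x : ℝ) (hx : 6 ≤ x) :
    HasDerivAt (fun x : ℝ =>
        (x - 1) * Real.log (2 * x^2 / (2 * x^2 + x - 1)) - Real.log ((x + 1) / (2 * x)))
      (Real.log (2 * x^2 / (2 * x^2 + x - 1)) +
        (x - 1)*(x - 2)/(x*(2*x^2 + x - 1)) + 1/(x*(x + 1))) x := by
  have hx0 : (0:ℝ) < x := by linarith
  have hd : (0:ℝ) < 2*x^2 + x - 1 := by nlinarith
  have hn : (0:ℝ) < 2*x^2 := by positivity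
  have hx1 : (0:ℝ) < x + 1 := by linarith
  have h2x : (0:ℝ) < 2*x := by linarith
  have h1 : HasDerivAt (fun y : ℝ => 2*y^2) (4*x) x := by
    have := (hasDerivAt_pow 2 x).const_mul (2:ℝ)
    refine this.congr_deriv ?_
    ring
  have h2 : HasDerivAt (fun y : ℝ => 2*y^2 + y - 1) (4*x + 1) x := by
    have := (h1.add (hasDerivAt_id x)).sub_const (1:ℝ)
    exact this
  have hq : HasDerivAt (fun y : ℝ => 2*y^2 / (2*y^2 + y - 1))
      ((4*x*(2*x^2 + x - 1) - 2*x^2*(4*x + 1)) / (2*x^2 + x - 1)^2) x :=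
    h1.div h2 hd.ne'
  have hq0 : (2*x^2) / (2*x^2 + x - 1) ≠ 0 := by positivity
  have hlog1 : HasDerivAt (fun y : ℝ => Real.log (2*y^2 / (2*y^2 + y - 1)))
      (((4*x*(2*x^2 + x - 1) - 2*x^2*(4*x + 1)) / (2*x^2 + x - 1)^2) /
        ((2*x^2) / (2*x^2 + x - 1))) x := hq.log hq0
  have hmul : HasDerivAt (fun y : ℝ => (y - 1) * Real.log (2*y^2 / (2*y^2 + y - 1)))
      (1 * Real.log (2*x^2 / (2*x^2 + x - 1)) + (x - 1) *
        (((4*x*(2*x^2 + x - 1) - 2*x^2*(4*x + 1)) / (2*x^2 + x - 1)^2) /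
          ((2*x^2) / (2*x^2 + x - 1)))) x :=
    ((hasDerivAt_id x).sub_const 1).mul hlog1
  have hden : HasDerivAt (fun y : ℝ => 2*y) 2 x := by
    simpa using (hasDerivAt_id x).const_mul (2:ℝ)
  have h3 : HasDerivAt (fun y : ℝ => (y + 1) / (2*y))
      ((1*(2*x) - (x + 1)*2) / (2*x)^2) x :=
    ((hasDerivAt_id x).add_const 1).div hden h2x.ne'
  have hq20 : (x + 1) / (2*x) ≠ 0 := by positivity
  have hlog2 : HasDerivAt (fun y : ℝ => Real.log ((y + 1) / (2*y)))
      (((1*(2*x) - (x + 1)*2) / (2*x)^2) / ((x + 1) / (2*x))) x := h3.log hq20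
  have := hmul.sub hlog2
  refine this.congr_deriv ?_
  field_simp
  ring

theorem aux_strictAntiOn :
    StrictAntiOn
      (fun x : ℝ =>
        (x - 1) * Real.log (2 * x^2 / (2 * x^2 + x - 1)) - Real.log ((x + 1) / (2 * x)))
      (Set.Ici (6 : ℝ)) := by
  apply strictAntiOn_of_deriv_neg (convex_Ici 6)
  · intro x hx
    exact (hasDerivAt_f x hx).differentiableAt.continuousAt.continuousWithinAt
  · intro x hx
    rw [interior_Ici] at hx
    have hx6 : (6:ℝ) ≤ x := le_of_lt hx
    rw [(hasDerivAt_f x hx6).deriv]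
    have hx0 : (0:ℝ) < x := by linarith
    have hd : (0:ℝ) < 2*x^2 + x - 1 := by nlinarith
    have hn : (0:ℝ) < 2*x^2 := by positivity
    -- rewrite the log
    set t : ℝ := (x - 1) / (2*x^2) with hts
    have ht0 : 0 ≤ t := div_nonneg (by linarith) (by positivity)
    have h1t : 1 + t = (2*x^2 + x - 1) / (2*x^2) := by
      rw [hts]
      field_simp [hx0.ne']
      ring
    have hlog : Real.log (2*x^2 / (2*x^2 + x - 1)) = - Real.log (1 + t) := by
      rw [h1t, Real.log_div hd.ne' hn.ne', Real.log_div hn.ne' hd.ne']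
      ring
    have hlb := log_quartic_lower t ht0
    have hkey := key_ineq x hx6
    rw [hlog]
    rw [hts] at hlb
    linarith
end

section
/- The function f : ℝ → ℝ given by f(x) = (x − 1) * Real.log (2*x^2 / (2*x^2 + x − 1)) − Real.log ((x + 1) / (2*x)) tends to Real.log 2 − 1/2 as x → ∞, and Real.log 2 − 1/2 > 0. -/
open Filter Real

theorem aux_limit :
    Filter.Tendsto
      (fun x : ℝ =>
        (x - 1) * Real.log (2 * x^2 / (2 * x^2 + x - 1)) - Real.log ((x + 1) / (2 * x)))
      Filter.atTop (nhds (Real.log 2 - 1/2)) ∧ Real.log 2 - 1/2 > 0 := by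
  constructor
  · -- limit of coefficient (x-1)^2/(2x^2) → 1/2
    have hinv : Tendsto (fun x : ℝ => x⁻¹) atTop (nhds 0) := tendsto_inv_atTop_zero
    have hA : Tendsto (fun x : ℝ => (x - 1)^2 / (2 * x^2)) atTop (nhds (1/2)) := by
      have h1 : Tendsto (fun x : ℝ => (1 - x⁻¹)^2 / 2) atTop (nhds (1/2)) := by
        have : Tendsto (fun x : ℝ => (1 - x⁻¹)^2 / 2) atTop (nhds ((1 - 0)^2 / 2)) := by
          exact (((tendsto_const_nhds.sub hinv).pow 2).div_const 2)
        simpa using this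
      refine h1.congr' ?_
      filter_upwards [eventually_gt_atTop (0:ℝ)] with x hx
      have hx' : x ≠ 0 := ne_of_gt hx
      rw [show (1 - x⁻¹) = (x-1)/x by field_simp, div_pow]
      field_simp
    have hB : Tendsto (fun x : ℝ => 2 * x^2 / (x - 1)) atTop atTop := by
      refine tendsto_atTop_mono' atTop ?_ tendsto_id
      filter_upwards [eventually_ge_atTop (2:ℝ)] with x hx
      have hx1 : (0:ℝ) < x - 1 := by linarith
      simp only [id_eq]
      rw [le_div_iff₀ hx1]
      nlinarith
    have hC : Tendsto (fun u : ℝ => u * Real.log (1 + 1 / u)) atTop (nhds 1) :=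
      Real.tendsto_mul_log_one_add_div_atTop 1
    have hCB : Tendsto (fun x : ℝ =>
        (2 * x^2 / (x - 1)) * Real.log (1 + 1 / (2 * x^2 / (x - 1)))) atTop (nhds 1) :=
      hC.comp hB
    have hfirst : Tendsto (fun x : ℝ =>
        -((x - 1)^2 / (2 * x^2) *
          ((2 * x^2 / (x - 1)) * Real.log (1 + 1 / (2 * x^2 / (x - 1)))))) atTop
        (nhds (-(1/2))) := by
      have := (hA.mul hCB).neg
      simpa using this
    have hfirst' : Tendsto (fun x : ℝ =>
        (x - 1) * Real.log (2 * x^2 / (2 * x^2 + x - 1))) atTop (nhds (-(1/2))) := by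
      refine hfirst.congr' ?_
      filter_upwards [eventually_ge_atTop (2:ℝ)] with x hx
      have hx0 : (0:ℝ) < x := by linarith
      have hx1 : (0:ℝ) < x - 1 := by linarith
      have hnum : (0:ℝ) < 2 * x^2 := by positivity
      have hden : (0:ℝ) < 2 * x^2 + x - 1 := by nlinarith
      have h1 : 1 + 1 / (2 * x^2 / (x - 1)) = (2 * x^2 + x - 1) / (2 * x^2) := by
        field_simp
        ring
      have h2 : Real.log (2 * x^2 / (2 * x^2 + x - 1)) =
          - Real.log ((2 * x^2 + x - 1) / (2 * x^2)) := by
        rw [Real.log_div (ne_of_gt hnum) (ne_of_gt hden),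
           Real.log_div (ne_of_gt hden) (ne_of_gt hnum)]
        ring
      rw [h1, h2]
      have h3 : (x - 1)^2 / (2 * x^2) * (2 * x^2 / (x - 1)) = x - 1 := by
        field_simp
      rw [← mul_assoc, h3]
      ring
    have hsecond : Tendsto (fun x : ℝ => Real.log ((x + 1) / (2 * x))) atTop
        (nhds (- Real.log 2)) := by
      have hin : Tendsto (fun x : ℝ => (x + 1) / (2 * x)) atTop (nhds (1/2)) := by
        have h1 : Tendsto (fun x : ℝ => 1/2 + x⁻¹ / 2) atTop (nhds (1/2)) := by
          have h0 : Tendsto (fun x : ℝ => (1:ℝ)/2 + x⁻¹ / 2) atTop (nhds (1/2 + 0/2)) :=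
            tendsto_const_nhds.add (hinv.div_const 2)
          simpa using h0
        refine h1.congr' ?_
        filter_upwards [eventually_gt_atTop (0:ℝ)] with x hx
        have hx' : x ≠ 0 := ne_of_gt hx
        rw [eq_div_iff (by positivity)]
        field_simp
      have hcont : ContinuousAt Real.log (1/2) := Real.continuousAt_log (by norm_num)
      have := hcont.tendsto.comp hin
      simpa [Function.comp_def, Real.log_div, Real.log_one] using this
    have := hfirst'.sub hsecond
    convert this using 2
    ring
  · have h := Real.log_two_gt_d9
    linarith
end

section
/- For every real number x ≥ 6, the function f(x) = (x − 1) * Real.log (2*x^2 / (2*x^2 + x − 1)) − Real.log ((x + 1) / (2*x)) satisfies f(x) > 0. -/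
theorem aux_positive (x : ℝ) (hx : 6 ≤ x) :
    (x - 1) * Real.log (2 * x^2 / (2 * x^2 + x - 1)) - Real.log ((x + 1) / (2 * x)) > 0 := by
  have hx0 : (0:ℝ) < x := by linarith
  have hA : (0:ℝ) < 2 * x^2 := by positivity
  have hB : (0:ℝ) < 2 * x^2 + x - 1 := by nlinarith
  have hx1 : (0:ℝ) < x + 1 := by linarith
  have e1 : Real.log (2 * x^2 / (2 * x^2 + x - 1))
      = Real.log (2 * x^2) - Real.log (2 * x^2 + x - 1) := Real.log_div hA.ne' hB.ne'
  have e2 : Real.log ((x + 1) / (2 * x))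
      = Real.log (x + 1) - Real.log (2 * x) := Real.log_div hx1.ne' (by positivity)
  have h3 : Real.log ((2 * x^2 + x - 1) / (2 * x^2)) ≤ (2 * x^2 + x - 1) / (2 * x^2) - 1 :=
    Real.log_le_sub_one_of_pos (by positivity)
  have h4 : Real.log ((x + 1) / (2 * x)) ≤ (x + 1) / (2 * x) - 1 :=
    Real.log_le_sub_one_of_pos (by positivity)
  have e3 : Real.log ((2 * x^2 + x - 1) / (2 * x^2))
      = Real.log (2 * x^2 + x - 1) - Real.log (2 * x^2) := Real.log_div hB.ne' hA.ne'
  have d1 : (2 * x^2 + x - 1) / (2 * x^2) - 1 = (x - 1) / (2 * x^2) := by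
    field_simp; ring
  have d2 : (x + 1) / (2 * x) - 1 = -((x - 1) / (2 * x)) := by
    field_simp; ring
  have hb1 : Real.log (2 * x^2 + x - 1) - Real.log (2 * x^2) ≤ (x - 1) / (2 * x^2) := by
    rw [← e3, ← d1]; exact h3
  have hb2 : Real.log (x + 1) - Real.log (2 * x) ≤ -((x - 1) / (2 * x)) := by
    rw [← e2, ← d2]; exact h4
  have hxm : (0:ℝ) ≤ x - 1 := by linarith
  have hmul : (x - 1) * (Real.log (2 * x^2 + x - 1) - Real.log (2 * x^2))
      ≤ (x - 1) * ((x - 1) / (2 * x^2)) := by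
    exact mul_le_mul_of_nonneg_left hb1 hxm
  have key : (x - 1) / (2 * x) - (x - 1) * ((x - 1) / (2 * x^2)) = (x - 1) / (2 * x^2) := by
    field_simp; ring
  have pos : (0:ℝ) < (x - 1) / (2 * x^2) := div_pos (by linarith) (by positivity)
  rw [e1, e2]
  nlinarith [hmul, hb2, key, pos]
end

section
/- Let m ≥ 1 be a natural number, let H be an m × m complex matrix that is Hermitian (H.IsHermitian) with trace H = 0, let v : Fin m → ℂ, and let t > 0 be real. Then 2 * Re (∑ i, ∑ j, conj (v i) * H i j * v j) ≤ t * (∑ i, ∑ j, ‖H i j‖^2) + ((m − 1)/m) * t⁻¹ * (∑ i, ‖v i‖^2)^2. -/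
open Complex in
theorem hermitian_traceless_estimate (m : ℕ) (hm : 1 ≤ m)
    (H : Matrix (Fin m) (Fin m) ℂ) (hH : H.IsHermitian) (htr : H.trace = 0)
    (v : Fin m → ℂ) (t : ℝ) (ht : 0 < t) :
    2 * (∑ i, ∑ j, (starRingEnd ℂ) (v i) * H i j * v j).re ≤
      t * (∑ i, ∑ j, ‖H i j‖^2) +
        (((m : ℝ) - 1) / m) * t⁻¹ * (∑ i, ‖v i‖^2)^2 := by
  have hm0 : (0:ℝ) < m := by exact_mod_cast hm
  set s : ℝ := ∑ i, ‖v i‖^2 with hs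
  have hs0 : 0 ≤ s := Finset.sum_nonneg fun i _ => sq_nonneg _
  set c : Fin m → Fin m → ℂ :=
    fun i j => (starRingEnd ℂ) (v i) * v j - if i = j then ((s/m : ℝ) : ℂ) else 0 with hc
  -- Step 1: subtract the trace part
  have htr' : ∑ i, H i i = 0 := htr
  have hS : (∑ i, ∑ j, (starRingEnd ℂ) (v i) * H i j * v j)
      = ∑ i, ∑ j, H i j * c i j := by
    have : ∑ i, ∑ j, H i j * c i j
        = (∑ i, ∑ j, (starRingEnd ℂ) (v i) * H i j * v j)
          - ((s/m : ℝ) : ℂ) * ∑ i, H i i := by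
      simp only [hc, mul_sub, Finset.sum_sub_distrib, mul_ite, mul_zero]
      congr 1
      · congr 1; ext i; congr 1; ext j; ring
      · rw [Finset.mul_sum]
        refine Finset.sum_congr rfl fun i _ => ?_
        rw [Finset.sum_ite_eq]
        simp [mul_comm]
    rw [this, htr', mul_zero, sub_zero]
  -- Step 2: bound Re by sum of norms
  have h2 : (∑ i, ∑ j, (starRingEnd ℂ) (v i) * H i j * v j).re
      ≤ ∑ i, ∑ j, ‖H i j‖ * ‖c i j‖ := by
    rw [hS]
    calc (∑ i, ∑ j, H i j * c i j).re ≤ ‖∑ i, ∑ j, H i j * c i j‖ := Complex.re_le_norm _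
      _ ≤ ∑ i, ‖∑ j, H i j * c i j‖ := norm_sum_le _ _
      _ ≤ ∑ i, ∑ j, ‖H i j * c i j‖ :=
          Finset.sum_le_sum fun i _ => norm_sum_le _ _
      _ = ∑ i, ∑ j, ‖H i j‖ * ‖c i j‖ := by simp [norm_mul]
  -- Step 3: Cauchy-Schwarz
  set A : ℝ := ∑ i, ∑ j, ‖H i j‖^2 with hA
  set B : ℝ := ∑ i, ∑ j, ‖c i j‖^2 with hB
  have hA0 : 0 ≤ A := Finset.sum_nonneg fun i _ => Finset.sum_nonneg fun j _ => sq_nonneg _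
  have hCS : ∑ i, ∑ j, ‖H i j‖ * ‖c i j‖ ≤ Real.sqrt A * Real.sqrt B := by
    have := Real.sum_mul_le_sqrt_mul_sqrt (Finset.univ : Finset (Fin m × Fin m))
      (fun p => ‖H p.1 p.2‖) (fun p => ‖c p.1 p.2‖)
    simpa [← Finset.sum_product', hA, hB, Finset.univ_product_univ] using this
  -- Step 4: compute B
  have hcii : ∀ i, c i i = ((‖v i‖^2 - s/m : ℝ) : ℂ) := by
    intro i
    simp only [hc, if_pos rfl]
    rw [Complex.conj_mul']
    push_cast
    ring
  have hB_eq : B = ((m : ℝ) - 1) / m * s^2 := by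
    have hrow : ∀ i, (∑ j, ‖c i j‖^2)
        = ‖v i‖^2 * s - 2 * (s/m) * ‖v i‖^2 + (s/m)^2 := by
      intro i
      have key : ∀ j, ‖c i j‖^2 =
          ‖v i‖^2 * ‖v j‖^2 + (if i = j then (s/m)^2 - 2*(s/m)*‖v i‖^2 else 0) := by
        intro j
        by_cases hij : i = j
        · subst hij
          rw [hcii i]
          simp only [if_pos rfl, eq_self_iff_true, if_true, Complex.norm_real, Real.norm_eq_abs, _root_.sq_abs]
          ring
        · simp only [hc, if_neg hij, sub_zero, norm_mul, RCLike.norm_conj]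
          rw [mul_pow]
          simp [hij]
      rw [Finset.sum_congr rfl fun j _ => key j, Finset.sum_add_distrib,
        Finset.sum_ite_eq]
      simp only [Finset.mem_univ, if_pos, ← Finset.mul_sum, ← hs]
      ring
    rw [hB, Finset.sum_congr rfl fun i _ => hrow i]
    have hre : ∀ i : Fin m, ‖v i‖^2 * s - 2 * (s/m) * ‖v i‖^2 + (s/m)^2
        = (s - 2*(s/m)) * ‖v i‖^2 + (s/m)^2 := fun i => by ring
    rw [Finset.sum_congr rfl fun i _ => hre i, Finset.sum_add_distrib, ← Finset.mul_sum,
      ← hs, Finset.sum_const, Finset.card_univ, Fintype.card_fin, nsmul_eq_mul]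
    field_simp
    ring
  have hB0 : 0 ≤ B := Finset.sum_nonneg fun i _ => Finset.sum_nonneg fun j _ => sq_nonneg _
  -- Step 5: AM-GM
  have hAMGM : 2 * (Real.sqrt A * Real.sqrt B) ≤ t * A + t⁻¹ * B := by
    have h1 : Real.sqrt t ^ 2 = t := Real.sq_sqrt ht.le
    have h2 : Real.sqrt t⁻¹ ^ 2 = t⁻¹ := Real.sq_sqrt (inv_nonneg.2 ht.le)
    have h3 : Real.sqrt A ^ 2 = A := Real.sq_sqrt hA0
    have h4 : Real.sqrt B ^ 2 = B := Real.sq_sqrt hB0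
    have h5 : Real.sqrt t * Real.sqrt t⁻¹ = 1 := by
      rw [← Real.sqrt_mul ht.le, mul_inv_cancel₀ ht.ne', Real.sqrt_one]
    have expand : (Real.sqrt t * Real.sqrt A - Real.sqrt t⁻¹ * Real.sqrt B)^2
        = t * A + t⁻¹ * B - 2 * (Real.sqrt A * Real.sqrt B) := by
      have e : (Real.sqrt t * Real.sqrt A - Real.sqrt t⁻¹ * Real.sqrt B)^2
          = Real.sqrt t ^2 * Real.sqrt A ^2 + Real.sqrt t⁻¹^2 * Real.sqrt B ^2
            - 2 * (Real.sqrt t * Real.sqrt t⁻¹) * (Real.sqrt A * Real.sqrt B) := by ring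
      rw [e, h1, h2, h3, h4, h5]; ring
    nlinarith [sq_nonneg (Real.sqrt t * Real.sqrt A - Real.sqrt t⁻¹ * Real.sqrt B)]
  calc 2 * (∑ i, ∑ j, (starRingEnd ℂ) (v i) * H i j * v j).re
      ≤ 2 * (Real.sqrt A * Real.sqrt B) := by
        have := h2.trans hCS
        linarith
    _ ≤ t * A + t⁻¹ * B := hAMGM
    _ = t * A + ((m : ℝ) - 1) / m * t⁻¹ * s^2 := by rw [hB_eq]; ring
end
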